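/- arXiv:1703.04427 — 2 statements merged into one kernel-verified Lean document; each statement's English description precedes it below -/
import Mathlib

section
/- For every α ≥ 2, the vector (2, ..., 2, 1) of length α (last entry 1, all other entries 2) is not 0-realizable: no tp0 cop-win graph has this as its rank cardinality vector. -/
namespace CopsRobbers

variable {V : Type*}

/-- The closed neighborhood of `v` within the vertex set `S` (graphs are reflexive,
so `v` itself belongs to its closed neighborhood). -/
def closedNbhd (G : SimpleGraph V) (S : Set V) (v : V) : Set V :=
  {u | u ∈ S ∧ (u = v ∨ G.Adj u v)}

/-- `v` is a strict corner of the subgraph induced on `S`: some other vertex `w ∈ S`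
strictly corners `v`, i.e. `N[v] ⊊ N[w]` within `S`. -/
def StrictCorner (G : SimpleGraph V) (S : Set V) (v : V) : Prop :=
  v ∈ S ∧ ∃ w ∈ S, w ≠ v ∧ closedNbhd G S v ⊂ closedNbhd G S w

/-- The remaining vertex sets of the corner ranking procedure (0-indexed auxiliary
version): at each step all current strict corners are removed. -/
def stageAux (G : SimpleGraph V) : ℕ → Set V
  | 0 => Set.univ
  | n + 1 => stageAux G n \ {v | StrictCorner G (stageAux G n) v}

/-- `stage G k` is the vertex set of `G^(k)` (for `k ≥ 1`), so `stage G 1 = V(G)`. -/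
def stage (G : SimpleGraph V) (k : ℕ) : Set V := stageAux G (k - 1)

/-- The corner rank of a vertex: the least `k ≥ 1` such that `v` is a strict corner
of `G^(k)`, or `G^(k)` is a clique still containing `v`; and `⊤` (that is, `∞`) if
there is no such `k`. -/
noncomputable def cornerRank (G : SimpleGraph V) (v : V) : ℕ∞ :=
  sInf {k : ℕ∞ | ∃ n : ℕ, k = (n : ℕ∞) ∧ 1 ≤ n ∧
    (StrictCorner G (stage G n) v ∨ (G.IsClique (stage G n) ∧ v ∈ stage G n))}

/-- The corner rank of a graph: the largest corner rank of a vertex. -/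
noncomputable def graphRank (G : SimpleGraph V) : ℕ∞ := ⨆ v, cornerRank G v

/-- A graph is cop-win iff every vertex has finite corner rank. -/
def CopWin (G : SimpleGraph V) : Prop := ∀ v, cornerRank G v ≠ ⊤

/-- `v` dominates the set `S`: `v` is (reflexively) adjacent to every vertex of `S`. -/
def Dominates (G : SimpleGraph V) (v : V) (S : Set V) : Prop :=
  ∀ u ∈ S, u = v ∨ G.Adj v u

/-- A cop-win graph of corner rank `α ≥ 2` is `tp1` if some vertex of corner rank `α`
dominates the vertex set of `G^(α-1)`. -/
def Tp1 (G : SimpleGraph V) : Prop :=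
  ∃ α : ℕ, 2 ≤ α ∧ graphRank G = (α : ℕ∞) ∧
    ∃ v, cornerRank G v = (α : ℕ∞) ∧ Dominates G v (stage G (α - 1))

/-- `G` realizes the vector `(x_α, …, x_1)` (written as the list `[x_α, …, x_1]`):
`G` is cop-win of corner rank `α` and for each `k`, `x_k` is the number of vertices
of corner rank `k`. -/
def Realizes (G : SimpleGraph V) (x : List ℕ) : Prop :=
  CopWin G ∧ graphRank G = (x.length : ℕ∞) ∧
  ∀ i : Fin x.length,
    x.get i = {v | cornerRank G v = ((x.length - (i : ℕ) : ℕ) : ℕ∞)}.ncard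

/-- `G` r-realizes `x` (for `r ∈ {0,1}`): `G` realizes `x` and `G` is tp-r. -/
def RRealizes (G : SimpleGraph V) (r : ℕ) (x : List ℕ) : Prop :=
  Realizes G x ∧ (Tp1 G ↔ r = 1)

/-- A vector is realizable if it is the rank cardinality vector of some finite cop-win graph. -/
def Realizable (x : List ℕ) : Prop :=
  ∃ (W : Type) (_ : Fintype W) (G : SimpleGraph W), Realizes G x

/-- A vector is r-realizable if some finite tp-r cop-win graph realizes it. -/
def RRealizable (r : ℕ) (x : List ℕ) : Prop :=
  ∃ (W : Type) (_ : Fintype W) (G : SimpleGraph W), RRealizes G r x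

open Classical in
/-- The capture time of a cop-win graph: `cr(G) - r(G)`. -/
noncomputable def captureTime (G : SimpleGraph V) : ℕ :=
  (graphRank G).toNat - (if Tp1 G then 1 else 0)

end CopsRobbers
namespace CopsRobbers

variable {V : Type*} {G : SimpleGraph V} {S S' : Set V} {u v w : V}

lemma closedNbhd_subset (G : SimpleGraph V) (S : Set V) (v : V) : closedNbhd G S v ⊆ S :=
  fun _ hu => hu.1

lemma mem_closedNbhd_self (hv : v ∈ S) : v ∈ closedNbhd G S v := ⟨hv, Or.inl rfl⟩

lemma closedNbhd_symm (hu : u ∈ S) (h : v ∈ closedNbhd G S u) : u ∈ closedNbhd G S v := by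
  refine ⟨hu, ?_⟩
  rcases h.2 with h' | h'
  · exact Or.inl h'.symm
  · exact Or.inr h'.symm

lemma closedNbhd_inter (h : S' ⊆ S) (v : V) :
    closedNbhd G S' v = closedNbhd G S v ∩ S' := by
  ext u
  constructor
  · intro hu; exact ⟨⟨h hu.1, hu.2⟩, hu.1⟩
  · intro hu; exact ⟨hu.2, hu.1.2⟩

lemma stageAux_succ_subset (G : SimpleGraph V) (n : ℕ) :
    stageAux G (n+1) ⊆ stageAux G n := fun _ hv => hv.1

lemma stageAux_antitone (G : SimpleGraph V) {m n : ℕ} (h : m ≤ n) :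
    stageAux G n ⊆ stageAux G m := by
  induction n with
  | zero => simp_all
  | succ n ih =>
    rcases Nat.lt_or_ge m (n+1) with h' | h'
    · exact (stageAux_succ_subset G n).trans (ih (by omega))
    · have : m = n + 1 := by omega
      subst this; exact fun _ hv => hv

lemma mem_stageAux_iff (n : ℕ) (v : V) :
    v ∈ stageAux G n ↔ ∀ m < n, ¬ StrictCorner G (stageAux G m) v := by
  induction n with
  | zero => simp [stageAux]
  | succ n ih =>
    constructor
    · intro hv m hm
      rcases Nat.lt_or_ge m n with h' | h'
      · exact (ih.mp hv.1) m h'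
      · have : m = n := by omega
        subst this
        exact hv.2
    · intro h
      exact ⟨ih.mpr (fun m hm => h m (by omega)), h n (by omega)⟩

lemma stage_one (G : SimpleGraph V) : stage G 1 = Set.univ := rfl

lemma stage_succ_eq (G : SimpleGraph V) {n : ℕ} (hn : 1 ≤ n) :
    stage G (n+1) = stage G n \ {v | StrictCorner G (stage G n) v} := by
  have h1 : n + 1 - 1 = (n - 1) + 1 := by omega
  rw [stage, h1, stageAux]
  rfl

lemma stage_antitone (G : SimpleGraph V) {m n : ℕ} (h : m ≤ n) :
    stage G n ⊆ stage G m := stageAux_antitone G (by omega)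

lemma mem_stage_iff {n : ℕ} (hn : 1 ≤ n) (v : V) :
    v ∈ stage G n ↔ ∀ m, 1 ≤ m → m < n → ¬ StrictCorner G (stage G m) v := by
  rw [stage, mem_stageAux_iff]
  constructor
  · intro h m h1 h2
    have := h (m-1) (by omega)
    rwa [show m - 1 = m - 1 from rfl, ← stage] at this
  · intro h m hm
    have := h (m+1) (by omega) (by omega)
    rwa [stage, Nat.add_sub_cancel] at this

lemma StrictCorner.not_mem_stage {m n : ℕ} (hm : 1 ≤ m) (hmn : m < n)
    (h : StrictCorner G (stage G m) v) : v ∉ stage G n := by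
  intro hv
  exact (mem_stage_iff (by omega) v).mp hv m hm hmn h

/-- The predicate underlying `cornerRank`. -/
def RankAt (G : SimpleGraph V) (n : ℕ) (v : V) : Prop :=
  1 ≤ n ∧ (StrictCorner G (stage G n) v ∨ (G.IsClique (stage G n) ∧ v ∈ stage G n))

lemma cornerRank_eq_sInf (G : SimpleGraph V) (v : V) :
    cornerRank G v = sInf {k : ℕ∞ | ∃ n : ℕ, k = (n : ℕ∞) ∧ RankAt G n v} := rfl

lemma cornerRank_eq_of {n : ℕ} (hP : RankAt G n v) (hmin : ∀ m < n, ¬ RankAt G m v) :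
    cornerRank G v = (n : ℕ∞) := by
  rw [cornerRank_eq_sInf]
  apply le_antisymm
  · exact sInf_le ⟨n, rfl, hP⟩
  · refine le_sInf ?_
    rintro b ⟨m, rfl, hm⟩
    have : n ≤ m := by
      by_contra h
      exact hmin m (by omega) hm
    exact_mod_cast this

lemma cornerRank_eq_coe_iff {n : ℕ} :
    cornerRank G v = (n : ℕ∞) ↔ RankAt G n v ∧ ∀ m < n, ¬ RankAt G m v := by
  constructor
  · intro h
    have hne : {m : ℕ | RankAt G m v}.Nonempty := by
      by_contra hemp
      rw [Set.not_nonempty_iff_eq_empty] at hemp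
      have : {k : ℕ∞ | ∃ n : ℕ, k = (n : ℕ∞) ∧ RankAt G n v} = ∅ := by
        ext k
        simp only [Set.mem_setOf_eq, Set.mem_empty_iff_false, iff_false]
        rintro ⟨m, rfl, hm⟩
        exact absurd hm (by simpa using Set.eq_empty_iff_forall_notMem.mp hemp m)
      rw [cornerRank_eq_sInf, this, sInf_empty] at h
      exact (ENat.top_ne_coe n) h
    set n₀ := sInf {m : ℕ | RankAt G m v} with hn₀
    have hP₀ : RankAt G n₀ v := Nat.sInf_mem hne
    have hmin₀ : ∀ m < n₀, ¬ RankAt G m v := fun m hm hP =>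
      absurd (Nat.sInf_le hP) (not_le.mpr hm)
    have := cornerRank_eq_of hP₀ hmin₀
    rw [h] at this
    have : n = n₀ := by exact_mod_cast this
    subst this
    exact ⟨hP₀, hmin₀⟩
  · rintro ⟨hP, hmin⟩
    exact cornerRank_eq_of hP hmin

end CopsRobbers
namespace CopsRobbers

variable {V : Type*} {G : SimpleGraph V} {α : ℕ} {v : V}

lemma rank_exists (hCop : CopWin G) (hRank : graphRank G = (α : ℕ∞)) (v : V) :
    ∃ n : ℕ, 1 ≤ n ∧ n ≤ α ∧ cornerRank G v = (n : ℕ∞) := by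
  obtain ⟨n, hn⟩ : ∃ n : ℕ, cornerRank G v = (n : ℕ∞) := by
    cases h : cornerRank G v with
    | top => exact absurd h (hCop v)
    | coe n => exact ⟨n, rfl⟩
  have hle : cornerRank G v ≤ graphRank G := le_iSup (cornerRank G) v
  rw [hn, hRank] at hle
  have h1 : RankAt G n v := (cornerRank_eq_coe_iff.mp hn).1
  exact ⟨n, h1.1, by exact_mod_cast hle, hn⟩

lemma no_clique_below {t : V} (ht : cornerRank G t = (α : ℕ∞)) :
    ∀ m, 1 ≤ m → m < α → ¬ G.IsClique (stage G m) := by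
  intro m hm1 hmα hclq
  obtain ⟨hPα, hmin⟩ := cornerRank_eq_coe_iff.mp ht
  have hmem : t ∈ stage G m := by
    rw [mem_stage_iff hm1]
    intro j hj1 hj2 hcor
    exact hmin j (by omega) ⟨hj1, Or.inl hcor⟩
  exact hmin m hmα ⟨hm1, Or.inr ⟨hclq, hmem⟩⟩

lemma rank_eq_iff_corner (hnc : ∀ m, 1 ≤ m → m < α → ¬ G.IsClique (stage G m))
    {k : ℕ} (hk1 : 1 ≤ k) (hkα : k < α) (v : V) :
    cornerRank G v = (k : ℕ∞) ↔ StrictCorner G (stage G k) v := by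
  constructor
  · intro h
    obtain ⟨⟨_, h2⟩, _⟩ := cornerRank_eq_coe_iff.mp h
    rcases h2 with h2 | h2
    · exact h2
    · exact absurd h2.1 (hnc k hk1 hkα)
  · intro h
    refine cornerRank_eq_coe_iff.mpr ⟨⟨hk1, Or.inl h⟩, ?_⟩
    rintro m hm ⟨hm1, hor⟩
    rcases hor with hc | hc
    · exact (StrictCorner.not_mem_stage hm1 hm hc) h.1
    · exact hnc m hm1 (by omega) hc.1

lemma mem_stage_iff_rank_ge (hCop : CopWin G) (hRank : graphRank G = (α : ℕ∞))
    (hnc : ∀ m, 1 ≤ m → m < α → ¬ G.IsClique (stage G m))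
    {k : ℕ} (hk1 : 1 ≤ k) (hkα : k ≤ α) (v : V) :
    v ∈ stage G k ↔ (k : ℕ∞) ≤ cornerRank G v := by
  obtain ⟨n, hn1, hnα, hn⟩ := rank_exists hCop hRank v
  rw [hn, Nat.cast_le]
  constructor
  · intro hv
    by_contra h
    obtain ⟨⟨_, hor⟩, _⟩ := cornerRank_eq_coe_iff.mp hn
    rcases hor with hc | hc
    · exact (StrictCorner.not_mem_stage hn1 (by omega) hc) hv
    · exact hnc n hn1 (by omega) hc.1
  · intro hkn
    rw [mem_stage_iff hk1]
    intro m hm1 hm2 hcor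
    exact (cornerRank_eq_coe_iff.mp hn).2 m (by omega) ⟨hm1, Or.inl hcor⟩

lemma stage_top_eq (hCop : CopWin G) (hRank : graphRank G = (α : ℕ∞))
    (hnc : ∀ m, 1 ≤ m → m < α → ¬ G.IsClique (stage G m)) (hα : 1 ≤ α) :
    stage G α = {v | cornerRank G v = (α : ℕ∞)} := by
  ext v
  obtain ⟨n, hn1, hnα, hn⟩ := rank_exists hCop hRank v
  rw [Set.mem_setOf_eq, mem_stage_iff_rank_ge hCop hRank hnc hα le_rfl v, hn, Nat.cast_le]
  constructor
  · intro h
    have : n = α := by omega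
    rw [this]
  · intro h
    have : n = α := by exact_mod_cast h
    omega

lemma clique_top (hCop : CopWin G) (hRank : graphRank G = (α : ℕ∞))
    (hnc : ∀ m, 1 ≤ m → m < α → ¬ G.IsClique (stage G m)) (hα : 1 ≤ α) {A B : V}
    (hAB : A ≠ B) (hset : {v | cornerRank G v = (α : ℕ∞)} = {A, B}) :
    G.IsClique (stage G α) := by
  by_contra hncl
  have hstage : stage G α = {A, B} := by
    rw [stage_top_eq hCop hRank hnc hα, hset]
  have corner : ∀ C ∈ ({A, B} : Set V), StrictCorner G (stage G α) C := by
    intro C hC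
    have hC' : cornerRank G C = (α : ℕ∞) := by rw [← hset] at hC; exact hC
    obtain ⟨⟨_, hor⟩, _⟩ := cornerRank_eq_coe_iff.mp hC'
    rcases hor with h | h
    · exact h
    · exact absurd h.1 hncl
  obtain ⟨_, wA, hwA, hwAne, hsubA⟩ := corner A (by simp)
  obtain ⟨_, wB, hwB, hwBne, hsubB⟩ := corner B (by simp)
  rw [hstage] at hwA hwB
  rcases hwA with rfl | rfl
  · exact hwAne rfl
  rcases hwB with rfl | rfl
  · exact ssubset_irrefl _ (hsubA.trans hsubB)
  · exact hwBne rfl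

lemma stage_decomp (hCop : CopWin G) (hRank : graphRank G = (α : ℕ∞))
    (hnc : ∀ m, 1 ≤ m → m < α → ¬ G.IsClique (stage G m))
    {k : ℕ} (hk1 : 1 ≤ k) (hkα : k < α) :
    stage G k = stage G (k+1) ∪ {v | cornerRank G v = (k : ℕ∞)} := by
  ext v
  constructor
  · intro hv
    obtain ⟨n, hn1, hnα, hn⟩ := rank_exists hCop hRank v
    have hkn : k ≤ n := by
      have := (mem_stage_iff_rank_ge hCop hRank hnc hk1 (by omega) v).mp hv
      rw [hn, Nat.cast_le] at this
      exact this
    rcases Nat.eq_or_lt_of_le hkn with h | h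
    · exact Or.inr (by rw [Set.mem_setOf_eq, hn, ← h])
    · refine Or.inl ((mem_stage_iff_rank_ge hCop hRank hnc (by omega) (by omega) v).mpr ?_)
      rw [hn, Nat.cast_le]
      omega
  · rintro (hv | hv)
    · exact stage_antitone G (by omega) hv
    · refine (mem_stage_iff_rank_ge hCop hRank hnc hk1 (by omega) v).mpr ?_
      rw [Set.mem_setOf_eq.mp hv]

lemma rank_not_mem_next (hCop : CopWin G) (hRank : graphRank G = (α : ℕ∞))
    (hnc : ∀ m, 1 ≤ m → m < α → ¬ G.IsClique (stage G m))
    {k : ℕ} (hkα : k < α) (hv : cornerRank G v = (k : ℕ∞)) :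
    v ∉ stage G (k+1) := by
  intro h
  have := (mem_stage_iff_rank_ge hCop hRank hnc (by omega) (by omega) v).mp h
  rw [hv, Nat.cast_le] at this
  omega

end CopsRobbers
namespace CopsRobbers

variable {V : Type*} {G : SimpleGraph V}

/-- Structural invariant: `S` has exactly two strict corners `e, f`, each of
(closed) degree 2, with distinct neighbors `a, b`. -/
structure Inv (G : SimpleGraph V) (S : Set V) (e f a b : V) : Prop where
  heS : e ∈ S
  hfS : f ∈ S
  haS : a ∈ S
  hbS : b ∈ S
  hef : e ≠ f
  hea : e ≠ a
  heb : e ≠ b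
  hfa : f ≠ a
  hfb : f ≠ b
  hab : a ≠ b
  hcor : {v | StrictCorner G S v} = {e, f}
  hne : closedNbhd G S e = {e, a}
  hnf : closedNbhd G S f = {f, b}

lemma Inv.symm {S : Set V} {e f a b : V} (h : Inv G S e f a b) : Inv G S f e b a :=
  ⟨h.hfS, h.heS, h.hbS, h.haS, h.hef.symm, h.hfb, h.hfa, h.heb, h.hea, h.hab.symm,
    by rw [h.hcor, Set.pair_comm], h.hnf, h.hne⟩

lemma Inv.no_common {S' : Set V} {p q a b w : V} (hInv : Inv G S' p q a b) {S : Set V}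
    (hS' : S' ⊆ S) (hwS' : w ∈ S') (hwp : w ∈ closedNbhd G S p)
    (hwq : w ∈ closedNbhd G S q) : False := by
  have h1 : w ∈ closedNbhd G S' p := by rw [closedNbhd_inter hS']; exact ⟨hwp, hwS'⟩
  have h2 : w ∈ closedNbhd G S' q := by rw [closedNbhd_inter hS']; exact ⟨hwq, hwS'⟩
  rw [hInv.hne] at h1
  rw [hInv.hnf] at h2
  simp only [Set.mem_insert_iff, Set.mem_singleton_iff] at h1 h2
  rcases h1 with rfl | rfl <;> rcases h2 with h | h
  · exact hInv.hef h
  · exact hInv.heb h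
  · exact hInv.hfa h.symm
  · exact hInv.hab h

lemma exists_extra {S S' : Set V} {p q a b : V} (hS' : S' ⊆ S)
    (hInv : Inv G S' p q a b) (hnc : ¬ StrictCorner G S p) :
    ∃ z, z ∈ S ∧ z ∉ S' ∧ z ∈ closedNbhd G S p ∧ z ∉ closedNbhd G S a := by
  have hpc : StrictCorner G S' p := by
    have : p ∈ {v | StrictCorner G S' v} := by rw [hInv.hcor]; exact Or.inl rfl
    exact this
  obtain ⟨hpS', w, hwS', hwp, hsub⟩ := hpc
  have hw : w = a := by
    have hpw : p ∈ closedNbhd G S' w := hsub.1 (mem_closedNbhd_self hpS')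
    have hmem : w ∈ closedNbhd G S' p := closedNbhd_symm hwS' hpw
    rw [hInv.hne] at hmem
    simp only [Set.mem_insert_iff, Set.mem_singleton_iff] at hmem
    rcases hmem with h | h
    · exact absurd h hwp
    · exact h
  rw [hw] at hsub
  obtain ⟨c, hca, hcp⟩ := Set.exists_of_ssubset hsub
  have hcS' : c ∈ S' := (closedNbhd_subset G S' a) hca
  have hcSa : c ∈ closedNbhd G S a := by
    rw [closedNbhd_inter hS'] at hca; exact hca.1
  have hcSp : c ∉ closedNbhd G S p := by
    intro h
    exact hcp (by rw [closedNbhd_inter hS']; exact ⟨h, hcS'⟩)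
  have hnsub : ¬ closedNbhd G S p ⊆ closedNbhd G S a := by
    intro hsub2
    have hne : closedNbhd G S p ≠ closedNbhd G S a := by
      intro h
      exact hcSp (h ▸ hcSa)
    exact hnc ⟨hS' hpS', a, hS' hInv.haS, hInv.hea.symm,
      Set.ssubset_iff_subset_ne.mpr ⟨hsub2, hne⟩⟩
  obtain ⟨z, hzp, hza⟩ := Set.not_subset.mp hnsub
  refine ⟨z, (closedNbhd_subset G S p) hzp, ?_, hzp, hza⟩
  intro hzS'
  apply hza
  have h1 : z ∈ closedNbhd G S' p := by rw [closedNbhd_inter hS']; exact ⟨hzp, hzS'⟩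
  have h2 : z ∈ closedNbhd G S' a := hsub.1 h1
  rw [closedNbhd_inter hS'] at h2
  exact h2.1

lemma nbhd_top {S S' : Set V} {e f p q a b : V}
    (hS : S = S' ∪ {e, f}) (he' : e ∉ S') (hf' : f ∉ S') (hef : e ≠ f)
    (hcor : {v | StrictCorner G S v} = {e, f})
    (hInv : Inv G S' p q a b)
    (hep : e ∈ closedNbhd G S p) (hea : e ∉ closedNbhd G S a)
    (hfq : f ∈ closedNbhd G S q) :
    closedNbhd G S e = {e, p} := by
  have hS' : S' ⊆ S := by rw [hS]; exact Set.subset_union_left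
  have heS : e ∈ S := by rw [hS]; exact Or.inr (Or.inl rfl)
  have hfS : f ∈ S := by rw [hS]; exact Or.inr (Or.inr rfl)
  have hpS : p ∈ S := hS' hInv.heS
  have hqS : q ∈ S := hS' hInv.hfS
  have hmemS : ∀ x ∈ S, x ∈ S' ∨ x = e ∨ x = f := by
    intro x hx; rw [hS] at hx
    rcases hx with h | h
    · exact Or.inl h
    · simp only [Set.mem_insert_iff, Set.mem_singleton_iff] at h; exact Or.inr h
  have hpe : p ∈ closedNbhd G S e := closedNbhd_symm hpS hep
  have hqf : q ∈ closedNbhd G S f := closedNbhd_symm hqS hfq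
  have hecor : StrictCorner G S e := by
    have : e ∈ {v | StrictCorner G S v} := by rw [hcor]; exact Or.inl rfl
    exact this
  have hfcor : StrictCorner G S f := by
    have : f ∈ {v | StrictCorner G S v} := by rw [hcor]; exact Or.inr rfl
    exact this
  have hfp : f ∉ closedNbhd G S p := by
    intro hfp
    have hpf : p ∈ closedNbhd G S f := closedNbhd_symm hpS hfp
    obtain ⟨_, w, hwS, hwf, hsubf⟩ := hfcor
    have hwp : w ∈ closedNbhd G S p := closedNbhd_symm hwS (hsubf.1 hpf)
    have hwq : w ∈ closedNbhd G S q := closedNbhd_symm hwS (hsubf.1 hqf)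
    rcases hmemS w hwS with hwS' | rfl | rfl
    · exact hInv.no_common hS' hwS' hwp hwq
    · obtain ⟨_, w₂, hw₂S, hw₂e, hsube⟩ := hecor
      have hw₂p : w₂ ∈ closedNbhd G S p := closedNbhd_symm hw₂S (hsube.1 hpe)
      have hw₂q : w₂ ∈ closedNbhd G S q :=
        closedNbhd_symm hw₂S (hsube.1 (hsubf.1 hqf))
      rcases hmemS w₂ hw₂S with h2 | rfl | rfl
      · exact hInv.no_common hS' h2 hw₂p hw₂q
      · exact hw₂e rfl
      · exact ssubset_irrefl _ (hsube.trans hsubf)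
    · exact hwf rfl
  obtain ⟨_, w, hwS, hwe, hsube⟩ := hecor
  have hwp : w ∈ closedNbhd G S p := closedNbhd_symm hwS (hsube.1 hpe)
  have hw : w = p := by
    rcases hmemS w hwS with hwS' | rfl | rfl
    · have hmem : w ∈ closedNbhd G S' p := by
        rw [closedNbhd_inter hS']; exact ⟨hwp, hwS'⟩
      rw [hInv.hne] at hmem
      simp only [Set.mem_insert_iff, Set.mem_singleton_iff] at hmem
      rcases hmem with rfl | rfl
      · rfl
      · exact absurd (hsube.1 (mem_closedNbhd_self heS)) hea
    · exact absurd rfl hwe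
    · exact absurd hwp hfp
  rw [hw] at hsube
  ext x
  simp only [Set.mem_insert_iff, Set.mem_singleton_iff]
  constructor
  · intro hx
    have hxp : x ∈ closedNbhd G S p := hsube.1 hx
    rcases hmemS x ((closedNbhd_subset G S e) hx) with hxS' | rfl | rfl
    · have hmem : x ∈ closedNbhd G S' p := by
        rw [closedNbhd_inter hS']; exact ⟨hxp, hxS'⟩
      rw [hInv.hne] at hmem
      simp only [Set.mem_insert_iff, Set.mem_singleton_iff] at hmem
      rcases hmem with rfl | h
      · exact Or.inr rfl
      · rw [h] at hx
        exact absurd (closedNbhd_symm heS hx) hea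
    · exact Or.inl rfl
    · exact absurd hxp hfp
  · rintro (rfl | rfl)
    · exact mem_closedNbhd_self heS
    · exact hpe

lemma half_step {S S' : Set V} {e f p q a b : V}
    (hS : S = S' ∪ {e, f}) (he' : e ∉ S') (hf' : f ∉ S') (hef : e ≠ f)
    (hcor : {v | StrictCorner G S v} = {e, f})
    (hInv : Inv G S' p q a b)
    (hep : e ∈ closedNbhd G S p) (hea : e ∉ closedNbhd G S a)
    (hfq : f ∈ closedNbhd G S q) (hfb : f ∉ closedNbhd G S b) :
    Inv G S e f p q := by
  have hS' : S' ⊆ S := by rw [hS]; exact Set.subset_union_left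
  have heS : e ∈ S := by rw [hS]; exact Or.inr (Or.inl rfl)
  have hfS : f ∈ S := by rw [hS]; exact Or.inr (Or.inr rfl)
  have h1 := nbhd_top hS he' hf' hef hcor hInv hep hea hfq
  have h2 := nbhd_top (S := S) (S' := S') (e := f) (f := e)
      (by rw [hS, Set.pair_comm]) hf' he' hef.symm (by rw [hcor, Set.pair_comm])
      hInv.symm hfq hfb hep
  exact ⟨heS, hfS, hS' hInv.heS, hS' hInv.hfS, hef,
    fun h => he' (h ▸ hInv.heS), fun h => he' (h ▸ hInv.hfS),
    fun h => hf' (h ▸ hInv.heS), fun h => hf' (h ▸ hInv.hfS),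
    hInv.hef, hcor, h1, h2⟩

lemma step_lemma {S S' : Set V} {e f p q a b : V}
    (hS : S = S' ∪ {e, f}) (he' : e ∉ S') (hf' : f ∉ S') (hef : e ≠ f)
    (hcor : {v | StrictCorner G S v} = {e, f})
    (hInv : Inv G S' p q a b) :
    ∃ e₁ f₁ a₁ b₁, Inv G S e₁ f₁ a₁ b₁ := by
  have hS' : S' ⊆ S := by rw [hS]; exact Set.subset_union_left
  have hnotcor : ∀ x ∈ S', ¬ StrictCorner G S x := by
    intro x hx hc
    have hmem : x ∈ ({e, f} : Set V) := by rw [← hcor]; exact hc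
    rcases hmem with rfl | rfl
    · exact he' hx
    · exact hf' hx
  obtain ⟨z, hzS, hzS', hzp, hza⟩ := exists_extra hS' hInv (hnotcor p hInv.heS)
  obtain ⟨z', hz'S, hz'S', hz'q, hz'b⟩ :=
    exists_extra hS' hInv.symm (hnotcor q hInv.hfS)
  have hz : z = e ∨ z = f := by
    rw [hS] at hzS
    rcases hzS with h | h
    · exact absurd h hzS'
    · simpa using h
  have hz'' : z' = e ∨ z' = f := by
    rw [hS] at hz'S
    rcases hz'S with h | h
    · exact absurd h hz'S'
    · simpa using h
  have hzz : z ≠ z' := by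
    rintro rfl
    have hpz : p ∈ closedNbhd G S z := closedNbhd_symm (hS' hInv.heS) hzp
    have hqz : q ∈ closedNbhd G S z := closedNbhd_symm (hS' hInv.hfS) hz'q
    have key : ∀ g h : V, (g = e ∧ h = f ∨ g = f ∧ h = e) →
        p ∈ closedNbhd G S g → q ∈ closedNbhd G S g →
        closedNbhd G S g ⊂ closedNbhd G S h := by
      intro g h hgh hpg hqg
      have hgcor : StrictCorner G S g := by
        have : g ∈ {v | StrictCorner G S v} := by
          rw [hcor]
          rcases hgh with ⟨rfl, _⟩ | ⟨rfl, _⟩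
          · exact Or.inl rfl
          · exact Or.inr rfl
        exact this
      obtain ⟨_, w, hwS, hwg, hsub⟩ := hgcor
      have hwp : w ∈ closedNbhd G S p := closedNbhd_symm hwS (hsub.1 hpg)
      have hwq : w ∈ closedNbhd G S q := closedNbhd_symm hwS (hsub.1 hqg)
      have hw : w = h := by
        rw [hS] at hwS
        rcases hwS with h' | h'
        · exact (hInv.no_common hS' h' hwp hwq).elim
        · simp only [Set.mem_insert_iff, Set.mem_singleton_iff] at h'
          rcases hgh with ⟨rfl, rfl⟩ | ⟨rfl, rfl⟩ <;> rcases h' with rfl | rfl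
          · exact absurd rfl hwg
          · rfl
          · rfl
          · exact absurd rfl hwg
      rw [← hw]; exact hsub
    rcases hz with rfl | rfl
    · have h1 := key z f (Or.inl ⟨rfl, rfl⟩) hpz hqz
      have h2 := key f z (Or.inr ⟨rfl, rfl⟩) (h1.1 hpz) (h1.1 hqz)
      exact ssubset_irrefl _ (h1.trans h2)
    · have h1 := key z e (Or.inr ⟨rfl, rfl⟩) hpz hqz
      have h2 := key e z (Or.inl ⟨rfl, rfl⟩) (h1.1 hpz) (h1.1 hqz)
      exact ssubset_irrefl _ (h1.trans h2)
  rcases hz with rfl | rfl <;> rcases hz'' with h' | h'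
  · exact absurd h'.symm hzz
  · subst h'
    exact ⟨z, z', p, q, half_step hS he' hf' hef hcor hInv hzp hza hz'q hz'b⟩
  · subst h'
    exact ⟨z, z', p, q, half_step (by rw [hS, Set.pair_comm]) hf' he' hef.symm
      (by rw [hcor, Set.pair_comm]) hInv hzp hza hz'q hz'b⟩
  · exact absurd h'.symm hzz

lemma final_lemma {S S' : Set V} {v₀ p q a b : V}
    (hS : S = S' ∪ {v₀}) (hv' : v₀ ∉ S')
    (hcor : {w | StrictCorner G S w} = {v₀})
    (hInv : Inv G S' p q a b) : False := by
  have hS' : S' ⊆ S := by rw [hS]; exact Set.subset_union_left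
  have hnotcor : ∀ x ∈ S', ¬ StrictCorner G S x := by
    intro x hx hc
    have hmem : x ∈ ({v₀} : Set V) := by rw [← hcor]; exact hc
    rw [Set.mem_singleton_iff] at hmem
    subst hmem; exact hv' hx
  obtain ⟨z, hzS, hzS', hzp, hza⟩ := exists_extra hS' hInv (hnotcor p hInv.heS)
  obtain ⟨z', hz'S, hz'S', hz'q, hz'b⟩ :=
    exists_extra hS' hInv.symm (hnotcor q hInv.hfS)
  have hz : z = v₀ := by
    rw [hS] at hzS
    rcases hzS with h | h
    · exact absurd h hzS'
    · simpa using h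
  have hz2 : z' = v₀ := by
    rw [hS] at hz'S
    rcases hz'S with h | h
    · exact absurd h hz'S'
    · simpa using h
  subst hz
  rw [hz2] at hz'q
  have hvcor : StrictCorner G S z := by
    have : z ∈ {w | StrictCorner G S w} := by rw [hcor]; rfl
    exact this
  obtain ⟨_, w, hwS, hwv, hsub⟩ := hvcor
  have hwp : w ∈ closedNbhd G S p :=
    closedNbhd_symm hwS (hsub.1 (closedNbhd_symm (hS' hInv.heS) hzp))
  have hwq : w ∈ closedNbhd G S q :=
    closedNbhd_symm hwS (hsub.1 (closedNbhd_symm (hS' hInv.hfS) hz'q))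
  rw [hS] at hwS
  rcases hwS with h | h
  · exact hInv.no_common hS' h hwp hwq
  · rw [Set.mem_singleton_iff] at h
    exact hwv h

end CopsRobbers
namespace CopsRobbers

variable {V : Type*} {G : SimpleGraph V}

lemma base_half {S : Set V} {a b c d : V}
    (hS : S = {a, b} ∪ {c, d})
    (hab' : a ≠ b) (hac : a ≠ c) (had : a ≠ d) (hbc : b ≠ c) (hbd : b ≠ d) (hcd : c ≠ d)
    (hadj : G.Adj a b)
    (hcor : {v | StrictCorner G S v} = {c, d})
    (hda : ¬ Dominates G a S) (hdb : ¬ Dominates G b S)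
    (hca : closedNbhd G S c ⊆ closedNbhd G S a)
    (hdbsub : closedNbhd G S d ⊆ closedNbhd G S b) :
    Inv G S c d a b := by
  have haS : a ∈ S := by rw [hS]; exact Or.inl (Or.inl rfl)
  have hbS : b ∈ S := by rw [hS]; exact Or.inl (Or.inr rfl)
  have hcS : c ∈ S := by rw [hS]; exact Or.inr (Or.inl rfl)
  have hdS : d ∈ S := by rw [hS]; exact Or.inr (Or.inr rfl)
  have hmem : ∀ x ∈ S, x = a ∨ x = b ∨ x = c ∨ x = d := by
    intro x hx; rw [hS] at hx
    simp only [Set.mem_union, Set.mem_insert_iff, Set.mem_singleton_iff] at hx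
    tauto
  have hAac : G.Adj a c := by
    have h := hca (mem_closedNbhd_self hcS)
    rcases h.2 with h' | h'
    · exact absurd h'.symm hac
    · exact h'.symm
  have hAbd : G.Adj b d := by
    have h := hdbsub (mem_closedNbhd_self hdS)
    rcases h.2 with h' | h'
    · exact absurd h'.symm hbd
    · exact h'.symm
  have hnad : ¬ G.Adj a d := by
    intro h
    apply hda
    intro u hu
    rcases hmem u hu with rfl | rfl | rfl | rfl
    · exact Or.inl rfl
    · exact Or.inr hadj
    · exact Or.inr hAac
    · exact Or.inr h
  have hnbc : ¬ G.Adj b c := by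
    intro h
    apply hdb
    intro u hu
    rcases hmem u hu with rfl | rfl | rfl | rfl
    · exact Or.inr hadj.symm
    · exact Or.inl rfl
    · exact Or.inr h
    · exact Or.inr hAbd
  have hncd : ¬ G.Adj c d := by
    intro h
    have hd' : d ∈ closedNbhd G S c := ⟨hdS, Or.inr h.symm⟩
    have h2 := hca hd'
    rcases h2.2 with h' | h'
    · exact had h'.symm
    · exact hnad h'.symm
  have hNc : closedNbhd G S c = {c, a} := by
    ext x
    simp only [Set.mem_insert_iff, Set.mem_singleton_iff]
    constructor
    · rintro ⟨hxS, hx⟩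
      rcases hmem x hxS with rfl | rfl | rfl | rfl
      · exact Or.inr rfl
      · rcases hx with h | h
        · exact absurd h hbc
        · exact absurd h hnbc
      · exact Or.inl rfl
      · rcases hx with h | h
        · exact absurd h.symm hcd
        · exact absurd h.symm hncd
    · rintro (rfl | rfl)
      · exact mem_closedNbhd_self hcS
      · exact ⟨haS, Or.inr hAac⟩
  have hNd : closedNbhd G S d = {d, b} := by
    ext x
    simp only [Set.mem_insert_iff, Set.mem_singleton_iff]
    constructor
    · rintro ⟨hxS, hx⟩
      rcases hmem x hxS with rfl | rfl | rfl | rfl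
      · rcases hx with h | h
        · exact absurd h had
        · exact absurd h hnad
      · exact Or.inr rfl
      · rcases hx with h | h
        · exact absurd h hcd
        · exact absurd h hncd
      · exact Or.inl rfl
    · rintro (rfl | rfl)
      · exact mem_closedNbhd_self hdS
      · exact ⟨hbS, Or.inr hAbd⟩
  exact ⟨hcS, hdS, haS, hbS, hcd, hac.symm, hbc.symm, had.symm, hbd.symm, hab',
    hcor, hNc, hNd⟩

lemma base_lemma {S : Set V} {a b c d : V}
    (hS : S = {a, b} ∪ {c, d})
    (hab' : a ≠ b) (hac : a ≠ c) (had : a ≠ d) (hbc : b ≠ c) (hbd : b ≠ d) (hcd : c ≠ d)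
    (hadj : G.Adj a b)
    (hcor : {v | StrictCorner G S v} = {c, d})
    (hda : ¬ Dominates G a S) (hdb : ¬ Dominates G b S) :
    ∃ e f a₁ b₁, Inv G S e f a₁ b₁ := by
  have haS : a ∈ S := by rw [hS]; exact Or.inl (Or.inl rfl)
  have hbS : b ∈ S := by rw [hS]; exact Or.inl (Or.inr rfl)
  have hcS : c ∈ S := by rw [hS]; exact Or.inr (Or.inl rfl)
  have hdS : d ∈ S := by rw [hS]; exact Or.inr (Or.inr rfl)
  have hmem : ∀ x ∈ S, x = a ∨ x = b ∨ x = c ∨ x = d := by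
    intro x hx; rw [hS] at hx
    simp only [Set.mem_union, Set.mem_insert_iff, Set.mem_singleton_iff] at hx
    tauto
  have hdom : ∀ w, w = a ∨ w = b → c ∈ closedNbhd G S w → d ∈ closedNbhd G S w →
      False := by
    intro w hw hc hd
    have hD : Dominates G w S := by
      intro u hu
      rcases hmem u hu with rfl | rfl | rfl | rfl
      · rcases hw with rfl | rfl
        · exact Or.inl rfl
        · exact Or.inr hadj.symm
      · rcases hw with rfl | rfl
        · exact Or.inr hadj
        · exact Or.inl rfl
      · rcases hc.2 with h | h
        · exact Or.inl h
        · exact Or.inr h.symm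
      · rcases hd.2 with h | h
        · exact Or.inl h
        · exact Or.inr h.symm
    rcases hw with rfl | rfl
    · exact hda hD
    · exact hdb hD
  have hccor : StrictCorner G S c := by
    have : c ∈ {v | StrictCorner G S v} := by rw [hcor]; exact Or.inl rfl
    exact this
  have hdcor : StrictCorner G S d := by
    have : d ∈ {v | StrictCorner G S v} := by rw [hcor]; exact Or.inr rfl
    exact this
  obtain ⟨_, wc, hwcS, hwcc, hsubc⟩ := hccor
  obtain ⟨_, wd, hwdS, hwdd, hsubd⟩ := hdcor
  have hwcd : wc ≠ d := by
    rintro rfl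
    have hwd' : wd = a ∨ wd = b := by
      rcases hmem wd hwdS with h | h | h | h
      · exact Or.inl h
      · exact Or.inr h
      · rw [h] at hsubd
        exact (ssubset_irrefl _ (hsubd.trans hsubc)).elim
      · exact absurd h hwdd
    exact hdom wd hwd' (hsubd.1 (hsubc.1 (mem_closedNbhd_self hcS)))
      (hsubd.1 (mem_closedNbhd_self hdS))
  have hwdc : wd ≠ c := by
    rintro rfl
    have hwc' : wc = a ∨ wc = b := by
      rcases hmem wc hwcS with h | h | h | h
      · exact Or.inl h
      · exact Or.inr h
      · exact absurd h hwcc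
      · rw [h] at hsubc
        exact (ssubset_irrefl _ (hsubc.trans hsubd)).elim
    exact hdom wc hwc' (hsubc.1 (mem_closedNbhd_self hcS))
      (hsubc.1 (hsubd.1 (mem_closedNbhd_self hdS)))
  have hwc' : wc = a ∨ wc = b := by
    rcases hmem wc hwcS with h | h | h | h
    · exact Or.inl h
    · exact Or.inr h
    · exact absurd h hwcc
    · exact absurd h hwcd
  have hwd' : wd = a ∨ wd = b := by
    rcases hmem wd hwdS with h | h | h | h
    · exact Or.inl h
    · exact Or.inr h
    · exact absurd h hwdc
    · exact absurd h hwdd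
  have hwcwd : wc ≠ wd := by
    rintro rfl
    exact hdom wc hwc' (hsubc.1 (mem_closedNbhd_self hcS))
      (hsubd.1 (mem_closedNbhd_self hdS))
  rcases hwc' with h1 | h1 <;> rcases hwd' with h2 | h2
  · rw [h1, h2] at hwcwd; exact absurd rfl hwcwd
  · rw [h1] at hsubc; rw [h2] at hsubd
    exact ⟨c, d, a, b, base_half hS hab' hac had hbc hbd hcd hadj hcor hda hdb
      hsubc.1 hsubd.1⟩
  · rw [h1] at hsubc; rw [h2] at hsubd
    exact ⟨c, d, b, a, base_half (by rw [hS, Set.pair_comm a b]) hab'.symm hbc hbd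
      hac had hcd hadj.symm hcor hdb hda hsubc.1 hsubd.1⟩
  · rw [h1, h2] at hwcwd; exact absurd rfl hwcwd

end CopsRobbers
/-- for `α ≥ 2`, the vector `(2, …, 2, 1)` of length `α` is not 0-realizable. -/
theorem CopsRobbers.twos_one_not_zero_realizable (α : ℕ) (hα : 2 ≤ α) :
    ¬ CopsRobbers.RRealizable 0 (List.replicate (α - 1) 2 ++ [1]) := by
  rintro ⟨W, _, G, ⟨⟨hCop, hRank, hCard⟩, hTp⟩⟩
  have hTp0 : ¬ CopsRobbers.Tp1 G := fun h => absurd (hTp.mp h) (by norm_num)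
  have hlen : (List.replicate (α - 1) 2 ++ [1]).length = α := by
    simp; omega
  rw [hlen] at hRank
  have hc : ∀ k : ℕ, 1 ≤ k → k ≤ α →
      {v | CopsRobbers.cornerRank G v = ((k : ℕ) : ℕ∞)}.ncard = if k = 1 then 1 else 2 := by
    intro k hk1 hkα
    have hi : α - k < (List.replicate (α - 1) 2 ++ [1]).length := by rw [hlen]; omega
    have h := hCard ⟨α - k, hi⟩
    have hsub : ((List.replicate (α - 1) 2 ++ [1]).length - ((⟨α - k, hi⟩ : Fin _) : ℕ) : ℕ) = k := by
      simp only [Fin.val_mk]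
      rw [hlen]
      omega
    rw [hsub] at h
    have hval : (List.replicate (α - 1) 2 ++ [1]).get ⟨α - k, hi⟩ = if k = 1 then 1 else 2 := by
      by_cases hk : k = 1
      · subst hk
        simp only [List.get_eq_getElem]
        rw [List.getElem_append_right (by simp)]
        simp
      · simp only [List.get_eq_getElem]
        rw [List.getElem_append_left (by simp; omega)]
        simp [hk]
    rw [hval] at h
    exact h.symm
  have hc1 : {v | CopsRobbers.cornerRank G v = ((1 : ℕ) : ℕ∞)}.ncard = 1 := by
    have := hc 1 le_rfl (by omega)
    rwa [if_pos rfl] at this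
  have hcα : {v | CopsRobbers.cornerRank G v = ((α : ℕ) : ℕ∞)}.ncard = 2 := by
    have := hc α (by omega) le_rfl
    rwa [if_neg (by omega)] at this
  obtain ⟨t, ht⟩ := Set.nonempty_of_ncard_ne_zero (s := {v | CopsRobbers.cornerRank G v = ((α : ℕ) : ℕ∞)}) (by rw [hcα]; norm_num)
  have hnc := CopsRobbers.no_clique_below (t := t) ht
  obtain ⟨A, B, hAB, hsetα⟩ := Set.ncard_eq_two.mp hcα
  have hclq : G.IsClique (CopsRobbers.stage G α) :=
    CopsRobbers.clique_top hCop hRank hnc (by omega) hAB hsetα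
  have hstageα : CopsRobbers.stage G α = {A, B} := by
    rw [CopsRobbers.stage_top_eq hCop hRank hnc (by omega), hsetα]
  have hrA : CopsRobbers.cornerRank G A = ((α : ℕ) : ℕ∞) := by
    have : A ∈ {v | CopsRobbers.cornerRank G v = ((α : ℕ) : ℕ∞)} := by
      rw [hsetα]; exact Or.inl rfl
    exact this
  have hrB : CopsRobbers.cornerRank G B = ((α : ℕ) : ℕ∞) := by
    have : B ∈ {v | CopsRobbers.cornerRank G v = ((α : ℕ) : ℕ∞)} := by
      rw [hsetα]; exact Or.inr rfl
    exact this
  have hadjAB : G.Adj A B :=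
    hclq (by rw [hstageα]; exact Or.inl rfl) (by rw [hstageα]; exact Or.inr rfl) hAB
  have hnd : ∀ w, CopsRobbers.cornerRank G w = ((α : ℕ) : ℕ∞) →
      ¬ CopsRobbers.Dominates G w (CopsRobbers.stage G (α - 1)) := by
    intro w hw hD
    exact hTp0 ⟨α, hα, hRank, w, hw, hD⟩
  obtain ⟨v₀, hv₀⟩ := Set.ncard_eq_one.mp hc1
  have hrv₀ : CopsRobbers.cornerRank G v₀ = ((1 : ℕ) : ℕ∞) := by
    have : v₀ ∈ {v | CopsRobbers.cornerRank G v = ((1 : ℕ) : ℕ∞)} := by rw [hv₀]; rfl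
    exact this
  rcases Nat.eq_or_lt_of_le hα with hα2 | hα3
  · -- case α = 2
    subst hα2
    have hv₀cor : CopsRobbers.StrictCorner G (CopsRobbers.stage G 1) v₀ :=
      (CopsRobbers.rank_eq_iff_corner hnc le_rfl (by omega) v₀).mp hrv₀
    obtain ⟨_, w, hwS, hwv, hsub⟩ := hv₀cor
    obtain ⟨n, hn1, hnα, hn⟩ := CopsRobbers.rank_exists hCop hRank w
    have hw2 : CopsRobbers.cornerRank G w = ((2 : ℕ) : ℕ∞) := by
      interval_cases n
      · exfalso
        have : w ∈ {v | CopsRobbers.cornerRank G v = ((1 : ℕ) : ℕ∞)} := hn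
        rw [hv₀] at this
        exact hwv this
      · exact hn
    have hwst : w ∈ CopsRobbers.stage G 2 := by
      rw [CopsRobbers.stage_top_eq hCop hRank hnc (by omega)]
      exact hw2
    have hdom : CopsRobbers.Dominates G w (CopsRobbers.stage G (2 - 1)) := by
      intro u hu
      obtain ⟨m, hm1, hmα, hm⟩ := CopsRobbers.rank_exists hCop hRank u
      interval_cases m
      · -- u has rank 1, so u = v₀
        have : u ∈ {v | CopsRobbers.cornerRank G v = ((1 : ℕ) : ℕ∞)} := hm
        rw [hv₀] at this
        rw [Set.mem_singleton_iff] at this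
        subst this
        have hv₀w : u ∈ CopsRobbers.closedNbhd G (CopsRobbers.stage G 1) w :=
          hsub.1 (CopsRobbers.mem_closedNbhd_self hu)
        rcases hv₀w.2 with h | h
        · exact Or.inl h
        · exact Or.inr h.symm
      · -- u has rank 2, so u ∈ {A, B}
        have hust : u ∈ CopsRobbers.stage G 2 := by
          rw [CopsRobbers.stage_top_eq hCop hRank hnc (by omega)]
          exact hm
        rw [hstageα] at hust hwst
        rcases hust with rfl | rfl <;> rcases hwst with h | h
        · exact Or.inl h.symm
        · rw [h]; exact Or.inr hadjAB.symm
        · rw [h]; exact Or.inr hadjAB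
        · exact Or.inl h.symm
    exact hnd w hw2 hdom
  · -- case α ≥ 3
    have h1α : 1 ≤ α - 1 := by omega
    have hαm1 : α - 1 < α := by omega
    have hcm : {v | CopsRobbers.cornerRank G v = ((α - 1 : ℕ) : ℕ∞)}.ncard = 2 := by
      have := hc (α - 1) h1α (by omega)
      rwa [if_neg (by omega)] at this
    obtain ⟨cc, dd, hccdd, hsetm⟩ := Set.ncard_eq_two.mp hcm
    have hcorm : {v | CopsRobbers.StrictCorner G (CopsRobbers.stage G (α - 1)) v} = {cc, dd} := by
      rw [← hsetm]
      ext v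
      exact (CopsRobbers.rank_eq_iff_corner hnc h1α hαm1 v).symm
    have hrcc : CopsRobbers.cornerRank G cc = ((α - 1 : ℕ) : ℕ∞) := by
      have : cc ∈ {v | CopsRobbers.cornerRank G v = ((α - 1 : ℕ) : ℕ∞)} := by
        rw [hsetm]; exact Or.inl rfl
      exact this
    have hrdd : CopsRobbers.cornerRank G dd = ((α - 1 : ℕ) : ℕ∞) := by
      have : dd ∈ {v | CopsRobbers.cornerRank G v = ((α - 1 : ℕ) : ℕ∞)} := by
        rw [hsetm]; exact Or.inr rfl
      exact this
    have hdecomp : CopsRobbers.stage G (α - 1) = {A, B} ∪ {cc, dd} := by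
      have := CopsRobbers.stage_decomp hCop hRank hnc h1α hαm1
      rw [show α - 1 + 1 = α by omega, hstageα, hsetm] at this
      exact this
    have hrankne : ∀ x y : W, CopsRobbers.cornerRank G x = ((α : ℕ) : ℕ∞) →
        CopsRobbers.cornerRank G y = ((α - 1 : ℕ) : ℕ∞) → x ≠ y := by
      rintro x y hx hy rfl
      rw [hx] at hy
      have : α = α - 1 := by exact_mod_cast hy
      omega
    have hbase := CopsRobbers.base_lemma hdecomp hAB (hrankne A cc hrA hrcc)
      (hrankne A dd hrA hrdd) (hrankne B cc hrB hrcc) (hrankne B dd hrB hrdd) hccdd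
      hadjAB hcorm (hnd A hrA) (hnd B hrB)
    have ind : ∀ dstep k, k + dstep = α - 1 → 2 ≤ k →
        ∃ e f a₁ b₁, CopsRobbers.Inv G (CopsRobbers.stage G k) e f a₁ b₁ := by
      intro dstep
      induction dstep with
      | zero =>
        intro k hk h2
        have : k = α - 1 := by omega
        subst this
        exact hbase
      | succ d ih =>
        intro k hk h2
        obtain ⟨p, q, a, b, hInv⟩ := ih (k + 1) (by omega) (by omega)
        have hk1 : 1 ≤ k := by omega
        have hkα : k < α := by omega
        have hck : {v | CopsRobbers.cornerRank G v = ((k : ℕ) : ℕ∞)}.ncard = 2 := by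
          have := hc k hk1 (by omega)
          rwa [if_neg (by omega)] at this
        obtain ⟨e, f, hef, hsetk⟩ := Set.ncard_eq_two.mp hck
        have hcork : {v | CopsRobbers.StrictCorner G (CopsRobbers.stage G k) v} = {e, f} := by
          rw [← hsetk]
          ext v
          exact (CopsRobbers.rank_eq_iff_corner hnc hk1 hkα v).symm
        have hre : CopsRobbers.cornerRank G e = ((k : ℕ) : ℕ∞) := by
          have : e ∈ {v | CopsRobbers.cornerRank G v = ((k : ℕ) : ℕ∞)} := by
            rw [hsetk]; exact Or.inl rfl
          exact this
        have hrf : CopsRobbers.cornerRank G f = ((k : ℕ) : ℕ∞) := by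
          have : f ∈ {v | CopsRobbers.cornerRank G v = ((k : ℕ) : ℕ∞)} := by
            rw [hsetk]; exact Or.inr rfl
          exact this
        have hdec : CopsRobbers.stage G k = CopsRobbers.stage G (k + 1) ∪ {e, f} := by
          rw [CopsRobbers.stage_decomp hCop hRank hnc hk1 hkα, hsetk]
        exact CopsRobbers.step_lemma hdec
          (CopsRobbers.rank_not_mem_next hCop hRank hnc hkα hre)
          (CopsRobbers.rank_not_mem_next hCop hRank hnc hkα hrf) hef hcork hInv
    obtain ⟨p, q, a, b, hInv2⟩ := ind (α - 3) 2 (by omega) le_rfl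
    have hcor1 : {w | CopsRobbers.StrictCorner G (CopsRobbers.stage G 1) w} = {v₀} := by
      rw [← hv₀]
      ext v
      exact (CopsRobbers.rank_eq_iff_corner hnc le_rfl (by omega) v).symm
    have hdec1 : CopsRobbers.stage G 1 = CopsRobbers.stage G 2 ∪ {v₀} := by
      have := CopsRobbers.stage_decomp hCop hRank hnc le_rfl (by omega)
      rw [hv₀] at this
      exact this
    exact CopsRobbers.final_lemma hdec1
      (CopsRobbers.rank_not_mem_next hCop hRank hnc (by omega) hrv₀) hcor1 hInv2
end

section
/- Suppose a cop-win graph G has rank cardinality vector (a, b, c, 1) for some positive integers a, b, c (so G has corner rank 4 and exactly one vertex of corner rank 1). Then there is a vertex of corner rank 3 or 4 in G that dominates the set X_2 of vertices of corner rank 2, i.e. is adjacent to every vertex of corner rank 2. -/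
/-!
Let `u` be the unique vertex of corner rank 1, so that `G^(2) = G - u`. A vertex `v` of corner
rank 2 is a strict corner of `G - u`; if `v` were not adjacent to `u`, its closed neighbourhood
would be the same in `G` as in `G - u`, making `v` a strict corner of `G` already. Hence
`X₂ ⊆ N[u]`, and so `X₂` is dominated by any vertex `w₀` strictly cornering `u`. Among the
vertices of `G^(2)` dominating `X₂`, one with an inclusion-maximal closed neighbourhood is not a
strict corner of `G^(2)` (a vertex cornering it would dominate `X₂` too), so its corner rank is
neither 1 nor 2.
-/

namespace CopsRobbers

variable {V : Type*} (G : SimpleGraph V)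

lemma closedNbhd_mono {S T : Set V} (hST : S ⊆ T) (v : V) :
    closedNbhd G S v ⊆ closedNbhd G T v :=
  fun _ hx => ⟨hST hx.1, hx.2⟩

lemma closedNbhd_diff_singleton {S : Set V} {u v : V} (hvu : v ≠ u) (hadj : ¬G.Adj v u) :
    closedNbhd G (S \ {u}) v = closedNbhd G S v := by
  ext x
  refine ⟨fun ⟨⟨hxS, _⟩, hx⟩ => ⟨hxS, hx⟩, fun ⟨hxS, hx⟩ => ⟨⟨hxS, ?_⟩, hx⟩⟩
  rintro rfl
  exact hx.elim (hvu ·.symm) (hadj ·.symm)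

lemma dominates_of_subset_closedNbhd {S X : Set V} {w : V} (hX : X ⊆ closedNbhd G S w) :
    Dominates G w X :=
  fun _ hx => (hX hx).2.imp_right SimpleGraph.Adj.symm

lemma StrictCorner.of_diff_singleton {S : Set V} {u v : V}
    (h : StrictCorner G (S \ {u}) v) (hadj : ¬G.Adj v u) : StrictCorner G S v := by
  obtain ⟨hv, w, hw, hwv, hlt⟩ := h
  refine ⟨hv.1, w, hw.1, hwv, ?_⟩
  rw [← closedNbhd_diff_singleton G hv.2 hadj]
  exact hlt.trans_subset (closedNbhd_mono G Set.sdiff_subset w)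

lemma exists_not_strictCorner_subset_closedNbhd [Finite V] {S X : Set V} {w₀ : V}
    (hw₀ : w₀ ∈ S) (hX : X ⊆ closedNbhd G S w₀) :
    ∃ w ∈ S, ¬StrictCorner G S w ∧ X ⊆ closedNbhd G S w := by
  obtain ⟨w, ⟨hwS, hwX⟩, hmax⟩ := exists_maximalFor_of_wellFoundedGT
    (fun w => w ∈ S ∧ X ⊆ closedNbhd G S w) (closedNbhd G S) ⟨w₀, hw₀, hX⟩
  refine ⟨w, hwS, ?_, hwX⟩
  rintro ⟨-, w', hw'S, -, hlt⟩
  exact hlt.not_ge (hmax ⟨hw'S, hwX.trans hlt.subset⟩ hlt.le)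

/-- `cornerRank G v` is the least `n ≥ 1` such that `RankedAt G n v`. -/
def RankedAt (n : ℕ) (v : V) : Prop :=
  StrictCorner G (stage G n) v ∨ (G.IsClique (stage G n) ∧ v ∈ stage G n)

variable {G}

lemma cornerRank_le {n : ℕ} {v : V} (hn : 1 ≤ n) (h : RankedAt G n v) :
    cornerRank G v ≤ n :=
  sInf_le ⟨n, rfl, hn, h⟩

lemma one_le_cornerRank (v : V) : 1 ≤ cornerRank G v :=
  le_sInf fun _ ⟨_, hk, hn, _⟩ => hk ▸ by exact_mod_cast hn

lemma rankedAt_of_cornerRank_eq {n : ℕ} {v : V} (h : cornerRank G v = n) : RankedAt G n v := by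
  have hne : {k : ℕ∞ | ∃ m : ℕ, k = m ∧ 1 ≤ m ∧ RankedAt G m v}.Nonempty :=
    Set.nonempty_iff_ne_empty.mpr fun hempty => ENat.natCast_ne_top n <|
      h.symm.trans <| (congrArg sInf hempty).trans sInf_empty
  obtain ⟨m, hm, -, hranked⟩ := csInf_mem hne
  rwa [← Nat.cast_inj.mp (hm.symm.trans h)]

lemma two_lt_cornerRank {v : V} (h1 : cornerRank G v ≠ 1) (h2 : cornerRank G v ≠ 2) :
    2 < cornerRank G v := by
  have h0 := one_le_cornerRank (G := G) v
  generalize cornerRank G v = r at *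
  induction r using ENat.recTopCoe with
  | top => exact ENat.natCast_lt_top 2
  | coe r =>
    norm_cast at h0 h1 h2 ⊢
    omega

lemma strictCorner_of_cornerRank_eq {n : ℕ} {v z : V} (hv : cornerRank G v = n)
    (hz : z ∈ stage G n) (hnz : (n : ℕ∞) < cornerRank G z) : StrictCorner G (stage G n) v := by
  have hn : 1 ≤ n := by exact_mod_cast hv ▸ one_le_cornerRank v
  refine (rankedAt_of_cornerRank_eq hv).resolve_right fun ⟨hclique, _⟩ => ?_
  exact (cornerRank_le hn (Or.inr ⟨hclique, hz⟩)).not_gt hnz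

lemma mem_stage_of_lt_cornerRank {v : V} :
    ∀ n : ℕ, (n : ℕ∞) < cornerRank G v → v ∈ stage G (n + 1)
  | 0, _ => Set.mem_univ v
  | n + 1, h => by
    refine ⟨mem_stage_of_lt_cornerRank n (lt_of_le_of_lt (by norm_num) h), fun hcorner => ?_⟩
    exact (cornerRank_le (n := n + 1) (by omega) (Or.inl hcorner)).not_gt h

section UniqueRankOne

variable {u z : V} (hu : {v | cornerRank G v = 1} = {u})
include hu

lemma strictCorner_stage_one (hz : 1 < cornerRank G z) : StrictCorner G (stage G 1) u :=
  strictCorner_of_cornerRank_eq (n := 1) (hu.symm.subset rfl) (Set.mem_univ z)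
    (by exact_mod_cast hz)

lemma stage_two_eq (hz : 1 < cornerRank G z) : stage G 2 = Set.univ \ {u} := by
  have hcorners : {v | StrictCorner G (stage G 1) v} = {u} := by
    refine Set.Subset.antisymm (fun v hv => ?_)
      (Set.singleton_subset_iff.mpr (strictCorner_stage_one hu hz))
    rw [← hu]
    exact le_antisymm (cornerRank_le le_rfl (Or.inl hv)) (one_le_cornerRank v)
  exact congrArg (stage G 1 \ ·) hcorners

variable (hz : 2 < cornerRank G z)
include hz

lemma adj_of_cornerRank_eq_two {v : V} (hv : cornerRank G v = 2) : G.Adj v u := by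
  have hz1 : (1 : ℕ∞) < cornerRank G z := hz.trans' (by norm_num)
  have hz2 : z ∈ stage G 2 := mem_stage_of_lt_cornerRank 1 (by exact_mod_cast hz1)
  have hcorner := strictCorner_of_cornerRank_eq (n := 2) (by exact_mod_cast hv) hz2
    (by exact_mod_cast hz)
  rw [stage_two_eq hu hz1] at hcorner
  by_contra hadj
  have hv1 := cornerRank_le (n := 1) le_rfl (Or.inl (hcorner.of_diff_singleton G hadj))
  rw [hv] at hv1
  norm_num at hv1

theorem exists_dominates_cornerRank_eq_two [Finite V] :
    ∃ x, 2 < cornerRank G x ∧ Dominates G x {v | cornerRank G v = 2} := by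
  have hz1 : (1 : ℕ∞) < cornerRank G z := hz.trans' (by norm_num)
  have hstage := stage_two_eq hu hz1
  obtain ⟨-, w₀, -, hw₀u, hlt⟩ := strictCorner_stage_one hu hz1
  have hX₂ : {v | cornerRank G v = 2} ⊆ closedNbhd G (stage G 2) w₀ := fun v hv => by
    have hvu := adj_of_cornerRank_eq_two hu hz hv
    exact ⟨hstage ▸ ⟨Set.mem_univ v, hvu.ne⟩, (hlt.subset ⟨Set.mem_univ v, Or.inr hvu⟩).2⟩
  obtain ⟨w, hw, hw_corner, hwX₂⟩ :=
    exists_not_strictCorner_subset_closedNbhd G (hstage ▸ ⟨Set.mem_univ w₀, hw₀u⟩) hX₂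
  refine ⟨w, two_lt_cornerRank (fun hw1 => ?_) (fun hw2 => ?_),
    dominates_of_subset_closedNbhd G hwX₂⟩
  · exact (hstage ▸ hw).2 (hu.subset hw1)
  · exact hw_corner (strictCorner_of_cornerRank_eq (by exact_mod_cast hw2)
      (mem_stage_of_lt_cornerRank 1 (by exact_mod_cast hz1)) (by exact_mod_cast hz))

end UniqueRankOne

end CopsRobbers

theorem CopsRobbers.rank3or4_dominates_rank2_general
    {V : Type} [Fintype V] (G : SimpleGraph V) (a b c : ℕ)
    (ha : 1 ≤ a)
    (h : CopsRobbers.Realizes G [a, b, c, 1]) :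
    ∃ x : V, (CopsRobbers.cornerRank G x = 3 ∨ CopsRobbers.cornerRank G x = 4) ∧
      CopsRobbers.Dominates G x {v | CopsRobbers.cornerRank G v = 2} := by
  obtain ⟨-, hrank, hcard⟩ := h
  have hX₁ : {v | cornerRank G v = 1}.ncard = 1 := by simpa using (hcard 3).symm
  have hX₄ : {v | cornerRank G v = 4}.ncard = a := by simpa using (hcard 0).symm
  obtain ⟨u, hu⟩ := Set.ncard_eq_one.mp hX₁
  obtain ⟨z, hz⟩ := Set.nonempty_of_ncard_ne_zero (hX₄ ▸ Nat.one_le_iff_ne_zero.mp ha)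
  obtain ⟨x, hx, hdom⟩ :=
    exists_dominates_cornerRank_eq_two hu (z := z)
      (by rw [show cornerRank G z = 4 from hz]; norm_num)
  have hrank4 : graphRank G = 4 := by simpa using hrank
  have hx4 : cornerRank G x ≤ 4 := hrank4 ▸ le_iSup (cornerRank G) x
  refine ⟨x, ?_, hdom⟩
  lift cornerRank G x to ℕ using ne_top_of_le_ne_top (by decide) hx4 with r
  norm_cast at hx hx4 ⊢
  omega

/-- if a cop-win graph realizes `(a, b, c, 1)`, then some vertex of corner
rank 3 or 4 dominates the set of vertices of corner rank 2. -/
theorem CopsRobbers.rank3or4_dominates_rank2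
    {V : Type} [Fintype V] (G : SimpleGraph V) (a b c : ℕ)
    (ha : 1 ≤ a) (hb : 1 ≤ b) (hc : 1 ≤ c)
    (h : CopsRobbers.Realizes G [a, b, c, 1]) :
    ∃ x : V, (CopsRobbers.cornerRank G x = 3 ∨ CopsRobbers.cornerRank G x = 4) ∧
      CopsRobbers.Dominates G x {v | CopsRobbers.cornerRank G v = 2} :=
  CopsRobbers.rank3or4_dominates_rank2_general G a b c ha h
end
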